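/- arXiv:2508.20403 — 2 statements merged into one kernel-verified Lean document; each statement's English description precedes it below -/
import Mathlib

section
/- Strictly similar edges share their LCA: let T be a tree rooted at r, let e = (u,v) be a pair of vertices with w = LCA(u,v), and let β = min(dist_T(u,w), dist_T(v,w)). If u' is a vertex with dist_T(u,u') ≤ β and v' is a vertex with dist_T(v,v') ≤ β, then LCA(u',v') = LCA(u,v). -/
/-- `a` is an ancestor of `x` in the tree `T` rooted at `r`: `a` lies on the unique
path from `r` to `x` (equivalently, the tree distance is additive through `a`). -/
def IsAncestor {V : Type*} (T : SimpleGraph V) (r a x : V) : Prop :=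
  T.dist r a + T.dist a x = T.dist r x

/-- `w` is the least common ancestor of `u` and `v` in the tree `T` rooted at `r`:
a common ancestor of maximal depth. -/
def IsLCA {V : Type*} (T : SimpleGraph V) (r w u v : V) : Prop :=
  IsAncestor T r w u ∧ IsAncestor T r w v ∧
    ∀ a : V, IsAncestor T r a u → IsAncestor T r a v → T.dist r a ≤ T.dist r w

/-!
In a tree the LCA `w` of `u` and `v` is the median of `r`, `u`, `v`, so it lies on the path
from `u` to `v`. If `w` lies on the path from `x` to `y` and `dist x x' ≤ dist x w`, then `w`
still lies on the path from `x'` to `y`: either `x'` branches off the `x – y` path on `x`'s side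
of `w`, or `x' = w`. Applying this to the paths `u – r`, `v – r` and `u – v` shows that `w` is a
common ancestor of `u'` and `v'` lying on the path between them, hence their LCA.
-/

namespace SimpleGraph

variable {V : Type*} {G T : SimpleGraph V}

def Between (G : SimpleGraph V) (x z y : V) : Prop :=
  G.dist x z + G.dist z y = G.dist x y

theorem Between.symm {x z y : V} (h : G.Between x z y) : G.Between y z x := by
  unfold Between at *
  rw [dist_comm, add_comm, dist_comm (u := z), dist_comm (u := y), h]

theorem Walk.isPath_append_of_forall_mem {u v w : V} {p : G.Walk u v} {q : G.Walk v w}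
    (hp : p.IsPath) (hq : q.IsPath) (h : ∀ c ∈ p.support, c ∈ q.support → c = v) :
    (p.append q).IsPath := by
  have hq' := hq.support_nodup
  rw [← q.cons_tail_support, List.nodup_cons] at hq'
  rw [Walk.isPath_def, Walk.support_append, List.nodup_append]
  refine ⟨hp.support_nodup, hq'.2, fun c hcp c' hcq hcc' => ?_⟩
  subst hcc'
  have hcq' : c ∈ q.support := q.cons_tail_support ▸ List.mem_cons_of_mem v hcq
  exact hq'.1 (h c hcp hcq' ▸ hcq)

namespace IsTree

variable (hT : T.IsTree)
include hT

theorem length_eq_dist_of_isPath {x y : V} {p : T.Walk x y} (hp : p.IsPath) :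
    p.length = T.dist x y := by
  obtain ⟨q, hq, hql⟩ := hT.connected.exists_path_of_dist x y
  rw [(hT.existsUnique_path x y).unique hp hq, hql]

theorem between_of_mem_support {x y z : V} {p : T.Walk x y} (hp : p.IsPath)
    (hz : z ∈ p.support) : T.Between x z y := by
  classical
  have hlen := congrArg Walk.length (p.take_spec hz)
  rw [Walk.length_append, hT.length_eq_dist_of_isPath (hp.takeUntil hz),
    hT.length_eq_dist_of_isPath (hp.dropUntil hz), hT.length_eq_dist_of_isPath hp] at hlen
  exact hlen

theorem mem_support_of_between {x y z : V} {p : T.Walk x y} (hp : p.IsPath)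
    (h : T.Between x z y) : z ∈ p.support := by
  obtain ⟨q₁, -, hq₁⟩ := hT.connected.exists_path_of_dist x z
  obtain ⟨q₂, -, hq₂⟩ := hT.connected.exists_path_of_dist z y
  have hq : (q₁.append q₂).IsPath := by
    refine Walk.isPath_of_length_eq_dist _ ?_
    rw [Walk.length_append, hq₁, hq₂]
    exact h
  rw [← (hT.existsUnique_path x y).unique hq hp]
  exact (Walk.mem_support_append_iff _ _).mpr (Or.inl q₁.end_mem_support)

/-- Points on a path are linearly ordered by their distance from its start. -/
theorem between_of_between_of_dist_le {x y a b : V} (ha : T.Between x a y)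
    (hb : T.Between x b y) (hle : T.dist x a ≤ T.dist x b) : T.Between x a b := by
  classical
  obtain ⟨p, hp, -⟩ := hT.connected.exists_path_of_dist x y
  have hbp := hT.mem_support_of_between hp hb
  have hap := hT.mem_support_of_between hp ha
  rw [← p.take_spec hbp, Walk.mem_support_append_iff] at hap
  rcases hap with hap | hap
  · exact hT.between_of_mem_support (hp.takeUntil hbp) hap
  · have hba : T.Between b a y := hT.between_of_mem_support (hp.dropUntil hbp) hap
    have := hT.connected.dist_triangle (u := x) (v := b) (w := a)
    have := hT.connected.dist_triangle (u := x) (v := a) (w := y)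
    have := dist_comm (G := T) (u := a) (v := b)
    unfold Between at *
    omega

theorem exists_median (x y z : V) :
    ∃ m, T.Between x m y ∧ T.Between x m z ∧ T.Between y m z := by
  classical
  obtain ⟨p, hp, -⟩ := hT.connected.exists_path_of_dist y z
  obtain ⟨m, hm, hmin⟩ := p.support.toFinset.exists_min_image (T.dist x)
    ⟨y, List.mem_toFinset.mpr p.start_mem_support⟩
  rw [List.mem_toFinset] at hm
  obtain ⟨q, hq, -⟩ := hT.connected.exists_path_of_dist m x
  -- `m` is the point of `p` closest to `x`, so the path from `m` to `x` leaves `p` at once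
  have hsep : ∀ c ∈ p.support, c ∈ q.support → c = m := by
    intro c hcp hcq
    have hmc : T.Between m c x := hT.between_of_mem_support hq hcq
    have := hmin c (List.mem_toFinset.mpr hcp)
    have := dist_comm (G := T) (u := x) (v := m)
    have := dist_comm (G := T) (u := x) (v := c)
    unfold Between at hmc
    exact ((hT.connected.dist_eq_zero_iff).mp (by omega)).symm
  have hym : T.Between y m x := hT.between_of_mem_support
    (Walk.isPath_append_of_forall_mem (hp.takeUntil hm) hq
      fun c hc => hsep c (p.support_takeUntil_subset_support hm hc))
    ((Walk.mem_support_append_iff _ _).mpr (Or.inr q.start_mem_support))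
  have hzm : T.Between z m x := hT.between_of_mem_support
    (Walk.isPath_append_of_forall_mem (hp.dropUntil hm).reverse hq fun c hc =>
      hsep c (p.support_dropUntil_subset_support hm (by simpa using hc)))
    ((Walk.mem_support_append_iff _ _).mpr (Or.inr q.start_mem_support))
  exact ⟨m, hym.symm, hzm.symm, hT.between_of_mem_support hp hm⟩

theorem between_of_dist_le_dist {x y w x' : V} (hw : T.Between x w y)
    (hx' : T.dist x x' ≤ T.dist x w) : T.Between x' w y := by
  obtain ⟨m, hxy, hxx', hyx'⟩ := hT.exists_median x y x'
  have := hT.connected.dist_triangle (u := x') (v := w) (w := y)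
  have := dist_comm (G := T) (u := y) (v := x')
  have := dist_comm (G := T) (u := y) (v := m)
  rcases le_total (T.dist x m) (T.dist x w) with hmw | hwm
  · -- `x'` branches off the path from `x` to `y` before reaching `w`
    have hxm := hT.between_of_between_of_dist_le hxy hw hmw
    have := hT.connected.dist_triangle (u := x') (v := m) (w := w)
    have := dist_comm (G := T) (u := x') (v := m)
    unfold Between at *
    omega
  · -- otherwise `x'` is too far from `x` unless `x' = w`
    have hxw := hT.between_of_between_of_dist_le hw hxy hwm
    have := hT.connected.dist_triangle (u := w) (v := x') (w := y)
    have := hT.connected.dist_triangle (u := w) (v := m) (w := x')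
    have := dist_comm (G := T) (u := w) (v := x')
    unfold Between at *
    omega

theorem between_of_isLCA {r u v w : V} (hw : IsLCA T r w u v) : T.Between u w v := by
  obtain ⟨hwu, hwv, hdeep⟩ := hw
  obtain ⟨m, hmu, hmv, hm⟩ := hT.exists_median r u v
  have hrm : T.Between r m w := hT.between_of_between_of_dist_le hmu hwu (hdeep m hmu hmv)
  have := hT.connected.dist_triangle (u := u) (v := w) (w := v)
  have := dist_comm (G := T) (u := u) (v := w)
  have := dist_comm (G := T) (u := u) (v := m)
  unfold Between IsAncestor at *
  omega

end IsTree

end SimpleGraph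

theorem IsLCA.of_between {V : Type*} {T : SimpleGraph V} (hc : T.Connected) {r u v w : V}
    (hu : IsAncestor T r w u) (hv : IsAncestor T r w v) (huv : T.Between u w v) :
    IsLCA T r w u v := by
  refine ⟨hu, hv, fun a hau hav => ?_⟩
  have := hc.dist_triangle (u := u) (v := a) (w := v)
  have := SimpleGraph.dist_comm (G := T) (u := u) (v := a)
  have := SimpleGraph.dist_comm (G := T) (u := u) (v := w)
  unfold SimpleGraph.Between IsAncestor at *
  omega

theorem strictly_similar_share_lca_general {V : Type*} (T : SimpleGraph V)
    (hT : T.IsTree) (r u v w : V) (hw : IsLCA T r w u v) (u' v' : V)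
    (hu' : T.dist u u' ≤ min (T.dist u w) (T.dist v w))
    (hv' : T.dist v v' ≤ min (T.dist u w) (T.dist v w)) :
    IsLCA T r w u' v' := by
  have hu : T.dist u u' ≤ T.dist u w := hu'.trans (min_le_left _ _)
  have hv : T.dist v v' ≤ T.dist v w := hv'.trans (min_le_right _ _)
  have hru : T.Between r w u := hw.1
  have hrv : T.Between r w v := hw.2.1
  have hu'v : T.Between u' w v := hT.between_of_dist_le_dist (hT.between_of_isLCA hw) hu
  have hu'v' : T.Between u' w v' := (hT.between_of_dist_le_dist hu'v.symm hv).symm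
  exact IsLCA.of_between hT.connected (hT.between_of_dist_le_dist hru.symm hu).symm
    (hT.between_of_dist_le_dist hrv.symm hv).symm hu'v'

/-- Strictly similar edges share their LCA: if `w = LCA(u,v)`,
`β = min(dist(u,w), dist(v,w))`, `dist(u,u') ≤ β` and `dist(v,v') ≤ β`, then
`w` is also the LCA of `u'` and `v'`. -/
theorem strictly_similar_share_lca {V : Type*} [Fintype V] (T : SimpleGraph V)
    (hT : T.IsTree) (r u v w : V) (hw : IsLCA T r w u v) (u' v' : V)
    (hu' : T.dist u u' ≤ min (T.dist u w) (T.dist v w))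
    (hv' : T.dist v v' ≤ min (T.dist u w) (T.dist v w)) :
    IsLCA T r w u' v' :=
  strictly_similar_share_lca_general T hT r u v w hw u' v' hu' hv'
end

section
/- Contrapositive of LCA-sharing: given a tree T rooted at r and two vertex pairs e = (u,v) and e' = (u',v'), if LCA(u,v) ≠ LCA(u',v'), then e' is not strictly similar to e, where strict similarity uses β = min(dist_T(u, LCA(u,v)), dist_T(v, LCA(u,v))). -/
/-- `(u', v')` is strictly similar to `(u, v)` whose LCA is `w`, with BFS step size
`β = min(dist(u,w), dist(v,w))`. -/
def StrictSim {V : Type*} (T : SimpleGraph V) (u v w u' v' : V) : Prop :=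
  (T.dist u u' ≤ min (T.dist u w) (T.dist v w) ∧ T.dist v v' ≤ min (T.dist u w) (T.dist v w)) ∨
  (T.dist v u' ≤ min (T.dist u w) (T.dist v w) ∧ T.dist u v' ≤ min (T.dist u w) (T.dist v w))

/-!
Write `h = dist r` for depth. In a tree the ancestors of a vertex form a chain, and any two
vertices `x, y` have a meet `m`, a common ancestor on the path between them, so that
`2 h m = h x + h y - d x y`. If `d u u' ≤ d u w`, the meet `m₁` of `u` and `u'` therefore
satisfies `h u' + h w ≤ 2 h m₁`; in particular `w` is an ancestor of `m₁`, hence of `u'`.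
Likewise for `v, v'`, so the LCA `w` is a common ancestor of `u', v'` and `h w ≤ h w'`.
Conversely, along the chain `u, u', v', v` the shallowest of `m₁, w', m₂` is a common ancestor
of `u` and `v`, and the bound on `h m₁, h m₂` forces `h w' ≤ h w`. Two ancestors of `u'` of
equal depth coincide.
-/

namespace SimpleGraph

variable {V : Type*} {T : SimpleGraph V} {r a b x y z : V}

theorem IsTree.length_eq_dist_of_isPath_s9 (hT : T.IsTree) {p : T.Walk x y} (hp : p.IsPath) :
    p.length = T.dist x y := by
  obtain ⟨q, hq, hql⟩ := hT.connected.exists_path_of_dist x y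
  rw [(hT.existsUnique_path x y).unique hp hq, hql]

theorem IsTree.dist_add_dist_of_mem_support [DecidableEq V] (hT : T.IsTree) {p : T.Walk x y}
    (hp : p.IsPath) (hz : z ∈ p.support) : T.dist x z + T.dist z y = T.dist x y := by
  rw [← hT.length_eq_dist_of_isPath_s9 (hp.takeUntil hz),
    ← hT.length_eq_dist_of_isPath_s9 (hp.dropUntil hz), ← Walk.length_append, Walk.take_spec,
    hT.length_eq_dist_of_isPath_s9 hp]

end SimpleGraph

section

open SimpleGraph

variable {V : Type*} {T : SimpleGraph V} {r a b w x y z : V}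

theorem IsAncestor.trans (hc : T.Connected) (hab : IsAncestor T r a b)
    (hbx : IsAncestor T r b x) : IsAncestor T r a x := by
  unfold IsAncestor at *
  have := hc.dist_triangle (u := a) (v := b) (w := x)
  have := hc.dist_triangle (u := r) (v := a) (w := x)
  omega

theorem IsAncestor.eq_of_dist_le (hc : T.Connected) (hab : IsAncestor T r a b)
    (hba : T.dist r b ≤ T.dist r a) : a = b :=
  hc.dist_eq_zero_iff.1 (by unfold IsAncestor at hab; omega)

theorem IsAncestor.mem_support (hT : T.IsTree) (hax : IsAncestor T r a x) {p : T.Walk r x}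
    (hp : p.IsPath) : a ∈ p.support := by
  obtain ⟨g, -, hg⟩ := hT.connected.exists_path_of_dist r a
  obtain ⟨q, -, hq⟩ := hT.connected.exists_path_of_dist a x
  have hgq : (g.append q).IsPath :=
    (g.append q).isPath_of_length_eq_dist (by rw [Walk.length_append, hg, hq]; exact hax)
  rw [(hT.existsUnique_path r x).unique hp hgq, Walk.mem_support_append_iff]
  exact Or.inl g.end_mem_support

theorem IsAncestor.isAncestor_of_dist_le (hT : T.IsTree) (hax : IsAncestor T r a x)
    (hbx : IsAncestor T r b x) (hab : T.dist r a ≤ T.dist r b) : IsAncestor T r a b := by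
  classical
  obtain ⟨p, hp, -⟩ := hT.connected.exists_path_of_dist r x
  have hb := hbx.mem_support hT hp
  have ha := hax.mem_support hT hp
  rw [← p.take_spec hb, Walk.mem_support_append_iff] at ha
  rcases ha with ha | ha
  · exact hT.dist_add_dist_of_mem_support (hp.takeUntil hb) ha
  · have := hT.dist_add_dist_of_mem_support (hp.dropUntil hb) ha
    unfold IsAncestor at hax hbx
    have hba : b = a := hT.connected.dist_eq_zero_iff.1 (by omega)
    subst hba
    simp [IsAncestor]

theorem IsAncestor.of_forall_mem_support (hT : T.IsTree) {m c : V} {q : T.Walk m c}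
    (hq : q.IsPath) (hmin : ∀ z ∈ q.support, T.dist r m ≤ T.dist r z) :
    IsAncestor T r m c := by
  classical
  obtain ⟨g, hg, hgl⟩ := hT.connected.exists_path_of_dist r m
  have hgq : (g.append q).IsPath := by
    rw [Walk.isPath_def, Walk.support_append, List.nodup_append]
    refine ⟨hg.support_nodup, hq.support_nodup.tail, fun z hzg z' hzq hzz' => ?_⟩
    subst hzz'
    have hzm : z = m := by
      have := hT.dist_add_dist_of_mem_support hg hzg
      have := hmin z (List.mem_of_mem_tail hzq)
      exact hT.connected.dist_eq_zero_iff.1 (by omega)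
    have hnd := hq.support_nodup
    rw [← Walk.cons_tail_support, List.nodup_cons] at hnd
    exact hnd.1 (hzm ▸ hzq)
  have := hT.length_eq_dist_of_isPath_s9 hgq
  rwa [Walk.length_append, hgl, hT.length_eq_dist_of_isPath_s9 hq] at this

/-- The witness is the shallowest vertex of the path from `x` to `y`. -/
theorem exists_isAncestor_isAncestor_dist_add_dist_eq (hT : T.IsTree) (r x y : V) :
    ∃ m, IsAncestor T r m x ∧ IsAncestor T r m y ∧ T.dist x m + T.dist m y = T.dist x y := by
  classical
  obtain ⟨p, hp, -⟩ := hT.connected.exists_path_of_dist x y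
  obtain ⟨m, hm, hmin⟩ := p.support.toFinset.exists_min_image (T.dist r) ⟨x, by simp⟩
  rw [List.mem_toFinset] at hm
  have hmin' : ∀ z ∈ p.support, T.dist r m ≤ T.dist r z := fun z hz =>
    hmin z (List.mem_toFinset.2 hz)
  refine ⟨m, ?_, ?_, hT.dist_add_dist_of_mem_support hp hm⟩
  · refine IsAncestor.of_forall_mem_support hT (hp.takeUntil hm).reverse fun z hz => hmin' z ?_
    rw [Walk.support_reverse, List.mem_reverse] at hz
    exact p.support_takeUntil_subset_support hm hz
  · exact IsAncestor.of_forall_mem_support hT (hp.dropUntil hm) fun z hz =>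
      hmin' z (p.support_dropUntil_subset_support hm hz)

theorem exists_isAncestor_isAncestor_min_le (hT : T.IsTree) (hax : IsAncestor T r a x)
    (hay : IsAncestor T r a y) (hby : IsAncestor T r b y) (hbz : IsAncestor T r b z) :
    ∃ c, IsAncestor T r c x ∧ IsAncestor T r c z ∧
      min (T.dist r a) (T.dist r b) ≤ T.dist r c := by
  rcases le_total (T.dist r a) (T.dist r b) with hab | hba
  · exact ⟨a, hax, (hay.isAncestor_of_dist_le hT hby hab).trans hT.connected hbz,
      min_le_left ..⟩
  · exact ⟨b, (hby.isAncestor_of_dist_le hT hay hba).trans hT.connected hax, hbz,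
      min_le_right ..⟩

theorem exists_isAncestor_isAncestor_of_dist_le (hT : T.IsTree) {u u' : V}
    (hwu : IsAncestor T r w u) (hd : T.dist u u' ≤ T.dist u w) :
    ∃ m, IsAncestor T r m u ∧ IsAncestor T r m u' ∧
      T.dist r u' + T.dist r w ≤ 2 * T.dist r m := by
  obtain ⟨m, hmu, hmu', hm⟩ := exists_isAncestor_isAncestor_dist_add_dist_eq hT r u u'
  refine ⟨m, hmu, hmu', ?_⟩
  unfold IsAncestor at hwu hmu hmu'
  rw [T.dist_comm (u := u) (v := w), T.dist_comm (u := u) (v := m)] at *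
  omega

theorem IsLCA.symm {u v : V} (hw : IsLCA T r w u v) : IsLCA T r w v u :=
  ⟨hw.2.1, hw.1, fun a hav hau => hw.2.2 a hau hav⟩

theorem IsLCA.eq_of_dist_le (hT : T.IsTree) {u v u' v' w' : V} (hw : IsLCA T r w u v)
    (hw' : IsLCA T r w' u' v') (hu : T.dist u u' ≤ T.dist u w) (hv : T.dist v v' ≤ T.dist v w) :
    w = w' := by
  obtain ⟨m₁, hm₁u, hm₁u', hm₁⟩ := exists_isAncestor_isAncestor_of_dist_le hT hw.1 hu
  obtain ⟨m₂, hm₂v, hm₂v', hm₂⟩ := exists_isAncestor_isAncestor_of_dist_le hT hw.2.1 hv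
  have hwu' : IsAncestor T r w u' :=
    (hw.1.isAncestor_of_dist_le hT hm₁u (by unfold IsAncestor at hm₁u'; omega)).trans
      hT.connected hm₁u'
  have hwv' : IsAncestor T r w v' :=
    (hw.2.1.isAncestor_of_dist_le hT hm₂v (by unfold IsAncestor at hm₂v'; omega)).trans
      hT.connected hm₂v'
  have hle : T.dist r w ≤ T.dist r w' := hw'.2.2 w hwu' hwv'
  obtain ⟨c₁, hc₁u, hc₁v', hc₁⟩ :=
    exists_isAncestor_isAncestor_min_le hT hm₁u hm₁u' hw'.1 hw'.2.1
  obtain ⟨c₂, hc₂u, hc₂v, hc₂⟩ := exists_isAncestor_isAncestor_min_le hT hc₁u hc₁v' hm₂v' hm₂v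
  have hge : T.dist r w' ≤ T.dist r w := by
    have := hw.2.2 c₂ hc₂u hc₂v
    have hw'u' := hw'.1
    have hw'v' := hw'.2.1
    unfold IsAncestor at hw'u' hw'v'
    omega
  exact (hwu'.isAncestor_of_dist_le hT hw'.1 hle).eq_of_dist_le hT.connected hge

end

theorem not_strictSim_of_ne_lca_general {V : Type*} (T : SimpleGraph V)
    (hT : T.IsTree) (r u v w u' v' w' : V)
    (hw : IsLCA T r w u v) (hw' : IsLCA T r w' u' v') (hne : w ≠ w') :
    ¬ StrictSim T u v w u' v' := by
  rintro (⟨hu, hv⟩ | ⟨hv, hu⟩)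
  · exact hne <| hw.eq_of_dist_le hT hw' (hu.trans (min_le_left ..)) (hv.trans (min_le_right ..))
  · exact hne <|
      hw.symm.eq_of_dist_le hT hw' (hv.trans (min_le_right ..)) (hu.trans (min_le_left ..))

/-- Contrapositive of LCA-sharing: pairs with distinct LCAs are never strictly similar. -/
theorem not_strictSim_of_ne_lca {V : Type*} [Fintype V] (T : SimpleGraph V)
    (hT : T.IsTree) (r u v w u' v' w' : V)
    (hw : IsLCA T r w u v) (hw' : IsLCA T r w' u' v') (hne : w ≠ w') :
    ¬ StrictSim T u v w u' v' :=
  not_strictSim_of_ne_lca_general T hT r u v w u' v' w' hw hw' hne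
end
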